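/- Let p ≥ 1 be an integer, let H₀ ∈ (0, 1 − 1/(2p)) and H₁ ∈ (1 − 1/(2p), 1), and set H̄ = (H₀ + H₁)/2. Then N^{p(1−H₁)−3/2} · Σ_{k,l=0}^{N−1} ρ_{H̄}(k−l)^p → 0 as N → ∞. -/

import Mathlib

/-!
`ρ_H(v)` is half the second difference of `x ↦ x ^ (2H)` at `|v|`, so
`|ρ_H(v)| ≤ C (|v| + 1) ^ (2H - 2)`. Hence for every `s ∈ (0, 1]` with `p (2H̄ - 2) ≤ s - 1` the
terms of the double sum are `O((|k - l| + 1) ^ (s - 1))` and the sum is `O(N ^ (1 + s))`.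
Since `p (2H̄ - 2) = -p (1 - H₀) - p (1 - H₁)` and `p (1 - H₁) < 1/2 < p (1 - H₀)`, such an `s`
can be taken with `p (1 - H₁) - 1/2 + s < 0`.
-/

open Filter Topology

/-- The autocovariance function of fractional Gaussian noise with Hurst index `H`:
`ρ_H(v) = ½(|v+1|^{2H} + |v−1|^{2H} − 2|v|^{2H})`. -/
noncomputable def rhoFGN (H : ℝ) (v : ℤ) : ℝ :=
  (|(v : ℝ) + 1| ^ (2 * H) + |(v : ℝ) - 1| ^ (2 * H) - 2 * |(v : ℝ)| ^ (2 * H)) / 2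

open Finset

lemma abs_rpow_sub_rpow_le {a r b c : ℝ} (ha : 0 < a) (hr : r ≤ 1) (hb : a ≤ b) (hc : a ≤ c) :
    |b ^ r - c ^ r| ≤ |r| * a ^ (r - 1) * |b - c| := by
  have hderiv : ∀ x ∈ Set.Ici a, HasDerivWithinAt (· ^ r) (r * x ^ (r - 1)) (Set.Ici a) x :=
    fun x hx => (Real.hasDerivAt_rpow_const (Or.inl (ha.trans_le hx).ne')).hasDerivWithinAt
  have hbound : ∀ x ∈ Set.Ici a, ‖r * x ^ (r - 1)‖ ≤ |r| * a ^ (r - 1) := fun x hx => by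
    rw [norm_mul, Real.norm_eq_abs, Real.norm_of_nonneg (Real.rpow_nonneg (ha.le.trans hx) _)]
    exact mul_le_mul_of_nonneg_left (Real.rpow_le_rpow_of_nonpos ha hx (by linarith)) (abs_nonneg r)
  simpa [Real.norm_eq_abs] using
    (convex_Ici a).norm_image_sub_le_of_norm_hasDerivWithin_le hderiv hbound hc hb

/-- Mean value theorem for `t ↦ (x + t) ^ s + (x - t) ^ s` on `[0, 1]`, whose derivative is
controlled by the Lipschitz bound on `y ↦ y ^ (s - 1)` over `[x - 1, ∞)`. -/
lemma abs_second_diff_rpow_le {s x : ℝ} (hs : s ≤ 2) (hx : 1 < x) :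
    |(x + 1) ^ s + (x - 1) ^ s - 2 * x ^ s| ≤ 2 * |s| * |s - 1| * (x - 1) ^ (s - 2) := by
  let g : ℝ → ℝ := fun t => (x + t) ^ s + (x - t) ^ s
  have hderiv : ∀ t ∈ Set.Icc (0 : ℝ) 1,
      HasDerivWithinAt g (s * ((x + t) ^ (s - 1) - (x - t) ^ (s - 1))) (Set.Icc 0 1) t := by
    intro t ht
    have hplus := ((hasDerivAt_id t).const_add x).rpow_const (p := s)
      (Or.inl (by simp only [id_eq, ne_eq]; linarith [ht.1]))
    have hminus := ((hasDerivAt_id t).const_sub x).rpow_const (p := s)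
      (Or.inl (by simp only [id_eq, ne_eq]; linarith [ht.2]))
    have hsum : s * ((x + t) ^ (s - 1) - (x - t) ^ (s - 1)) =
        1 * s * (x + id t) ^ (s - 1) + -1 * s * (x - id t) ^ (s - 1) := by
      simp only [id]; ring
    rw [hsum]
    exact (hplus.add hminus).hasDerivWithinAt
  have hbound : ∀ t ∈ Set.Icc (0 : ℝ) 1,
      ‖s * ((x + t) ^ (s - 1) - (x - t) ^ (s - 1))‖ ≤ 2 * |s| * |s - 1| * (x - 1) ^ (s - 2) := by
    rintro t ⟨ht0, ht1⟩
    have hlip := abs_rpow_sub_rpow_le (r := s - 1) (sub_pos.2 hx) (by linarith)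
      (by linarith : x - 1 ≤ x + t) (by linarith : x - 1 ≤ x - t)
    rw [show s - 1 - 1 = s - 2 by ring, show x + t - (x - t) = 2 * t by ring,
      abs_of_nonneg (by linarith : 0 ≤ 2 * t)] at hlip
    have hpow : 0 ≤ (x - 1) ^ (s - 2) := Real.rpow_nonneg (by linarith) _
    rw [norm_mul, Real.norm_eq_abs, Real.norm_eq_abs]
    calc |s| * |(x + t) ^ (s - 1) - (x - t) ^ (s - 1)|
        ≤ |s| * (|s - 1| * (x - 1) ^ (s - 2) * (2 * t)) := by gcongr
      _ ≤ |s| * (|s - 1| * (x - 1) ^ (s - 2) * 2) := by gcongr; linarith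
      _ = 2 * |s| * |s - 1| * (x - 1) ^ (s - 2) := by ring
  have h := (convex_Icc (0 : ℝ) 1).norm_image_sub_le_of_norm_hasDerivWithin_le hderiv hbound
    (Set.left_mem_Icc.2 zero_le_one) (Set.right_mem_Icc.2 zero_le_one)
  rw [Real.norm_eq_abs, show g 1 - g 0 = (x + 1) ^ s + (x - 1) ^ s - 2 * x ^ s by
    simp only [g, add_zero, sub_zero]; ring] at h
  simpa using h

lemma rhoFGN_neg (H : ℝ) (v : ℤ) : rhoFGN H (-v) = rhoFGN H v := by
  simp only [rhoFGN, Int.cast_neg, abs_neg, ← abs_neg (-(v : ℝ) + 1), ← abs_neg (-(v : ℝ) - 1),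
    neg_add, neg_sub, neg_neg]
  ring_nf

lemma rhoFGN_natCast {H : ℝ} {n : ℕ} (hn : 1 ≤ n) :
    rhoFGN H n =
      (((n : ℝ) + 1) ^ (2 * H) + ((n : ℝ) - 1) ^ (2 * H) - 2 * (n : ℝ) ^ (2 * H)) / 2 := by
  have hn' : (1 : ℝ) ≤ n := by exact_mod_cast hn
  simp only [rhoFGN, Int.cast_natCast]
  rw [abs_of_nonneg (by linarith), abs_of_nonneg (by linarith), abs_of_nonneg (by linarith)]

lemma rpow_sub_one_le_nine_mul_rpow_add_one {x e : ℝ} (hx : 2 ≤ x) (he0 : -2 ≤ e) (he : e ≤ 0) :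
    (x - 1) ^ e ≤ 9 * (x + 1) ^ e := by
  have h3 : (1 / 9 : ℝ) ≤ 3 ^ e := by
    have := Real.rpow_le_rpow_of_exponent_le (x := 3) (by norm_num) he0
    norm_num [Real.rpow_neg] at this
    norm_num
    exact this
  calc (x - 1) ^ e ≤ ((x + 1) / 3) ^ e :=
        Real.rpow_le_rpow_of_nonpos (by positivity) (by linarith) he
    _ = (x + 1) ^ e / 3 ^ e := Real.div_rpow (by linarith) (by norm_num) e
    _ ≤ 9 * (x + 1) ^ e := by
      rw [div_le_iff₀ (by positivity)]
      nlinarith [Real.rpow_nonneg (by linarith : (0 : ℝ) ≤ x + 1) e]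

lemma abs_rhoFGN_natCast_le {H : ℝ} (h0 : 0 ≤ H) (h1 : H ≤ 1) (n : ℕ) :
    |rhoFGN H n| ≤ 18 * ((n : ℝ) + 1) ^ (2 * H - 2) := by
  obtain rfl | rfl | hn := (by omega : n = 0 ∨ n = 1 ∨ 2 ≤ n)
  · have h0le := Real.zero_rpow_le_one (2 * H)
    have h0ge := Real.zero_rpow_nonneg (2 * H)
    norm_num [rhoFGN, abs_le]
    constructor <;> linarith
  · have h4 : (2 : ℝ) ^ (2 * H) ≤ 4 := by
      have := Real.rpow_le_rpow_of_exponent_le (x := 2) (by norm_num) (by linarith : 2 * H ≤ 2)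
      norm_num at this
      exact this
    have h14 : (1 / 4 : ℝ) ≤ 2 ^ (2 * H - 2) := by
      have := Real.rpow_le_rpow_of_exponent_le (x := 2) (by norm_num)
        (by linarith : (-2 : ℝ) ≤ 2 * H - 2)
      norm_num [Real.rpow_neg] at this
      norm_num
      exact this
    have h0le := Real.zero_rpow_le_one (2 * H)
    have h0ge := Real.zero_rpow_nonneg (2 * H)
    have h2ge := Real.rpow_nonneg (by norm_num : (0 : ℝ) ≤ 2) (2 * H)
    norm_num [rhoFGN, abs_le]
    constructor <;> linarith
  · have hx : (2 : ℝ) ≤ n := by exact_mod_cast hn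
    have hsd := abs_second_diff_rpow_le (s := 2 * H) (by linarith) (by linarith : (1 : ℝ) < n)
    have hcoef : 2 * |2 * H| * |2 * H - 1| ≤ 4 := by
      rw [abs_of_nonneg (by linarith)]
      have : |2 * H - 1| ≤ 1 := abs_le.2 ⟨by linarith, by linarith⟩
      nlinarith [abs_nonneg (2 * H - 1)]
    have hshift := rpow_sub_one_le_nine_mul_rpow_add_one hx (e := 2 * H - 2) (by linarith)
      (by linarith)
    rw [rhoFGN_natCast (by omega), abs_div, abs_two, div_le_iff₀ two_pos]
    calc _ ≤ 2 * |2 * H| * |2 * H - 1| * ((n : ℝ) - 1) ^ (2 * H - 2) := hsd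
      _ ≤ 4 * (9 * ((n : ℝ) + 1) ^ (2 * H - 2)) :=
        mul_le_mul hcoef hshift (Real.rpow_nonneg (by linarith) _) (by norm_num)
      _ = _ := by ring

lemma abs_rhoFGN_le {H : ℝ} (h0 : 0 ≤ H) (h1 : H ≤ 1) (v : ℤ) :
    |rhoFGN H v| ≤ 18 * ((v.natAbs : ℝ) + 1) ^ (2 * H - 2) := by
  obtain hv | hv := Int.natAbs_eq v <;> rw [hv]
  · exact abs_rhoFGN_natCast_le h0 h1 _
  · rw [rhoFGN_neg, Int.natAbs_neg, Int.natAbs_natCast]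
    exact abs_rhoFGN_natCast_le h0 h1 _

lemma mul_rpow_sub_one_le_rpow_sub_rpow {s w : ℝ} (hs0 : 0 ≤ s) (hs1 : s ≤ 1) (hw : 1 ≤ w) :
    s * w ^ (s - 1) ≤ w ^ s - (w - 1) ^ s := by
  have hw0 : 0 < w := by linarith
  have hbern := rpow_one_add_le_one_add_mul_self (s := -1 / w)
    (by rw [neg_div, neg_le_neg_iff, div_le_one hw0]; exact hw) hs0 hs1
  have hsplit : (w - 1) ^ s = w ^ s * (1 + -1 / w) ^ s := by
    rw [← Real.mul_rpow hw0.le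
      (by rw [neg_div, ← sub_eq_add_neg, sub_nonneg, div_le_one hw0]; exact hw)]
    congr 1
    field_simp
    ring
  rw [hsplit, Real.rpow_sub_one hw0.ne']
  calc s * (w ^ s / w) = w ^ s - w ^ s * (1 + s * (-1 / w)) := by field_simp; ring
    _ ≤ w ^ s - w ^ s * (1 + -1 / w) ^ s := by gcongr

lemma sum_range_add_one_rpow_le {s : ℝ} (hs0 : 0 < s) (hs1 : s ≤ 1) (N : ℕ) :
    ∑ v ∈ range N, ((v : ℝ) + 1) ^ (s - 1) ≤ (N : ℝ) ^ s / s := by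
  rw [le_div_iff₀ hs0, sum_mul]
  have htel := sum_range_sub (fun v : ℕ => (v : ℝ) ^ s) N
  simp only [Nat.cast_zero, Real.zero_rpow hs0.ne', sub_zero, Nat.cast_succ] at htel
  rw [← htel]
  gcongr with v
  have := mul_rpow_sub_one_le_rpow_sub_rpow hs0.le hs1 (by linarith [v.cast_nonneg (α := ℝ)] :
    (1 : ℝ) ≤ v + 1)
  rw [add_sub_cancel_right] at this
  linarith

lemma sum_range_natAbs_sub_le {G : ℕ → ℝ} (hG : ∀ v, 0 ≤ G v) {N k : ℕ} (hk : k < N) :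
    ∑ l ∈ range N, G ((k : ℤ) - l).natAbs ≤ 2 * ∑ v ∈ range N, G v := by
  have hmaps : ∀ l ∈ range N, ((k : ℤ) - l).natAbs ∈ range N := by
    intro l hl; rw [mem_range] at hl ⊢; omega
  rw [← sum_fiberwise_of_maps_to hmaps, mul_sum]
  gcongr with v
  have hfiber : {l ∈ range N | ((k : ℤ) - (l : ℕ)).natAbs = v} ⊆ ({k + v, k - v} : Finset ℕ) := by
    intro l hl
    simp only [mem_filter] at hl
    simp only [mem_insert, mem_singleton]
    omega
  rw [sum_congr rfl fun l hl => by rw [(mem_filter.1 hl).2], sum_const, nsmul_eq_mul]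
  gcongr
  · exact hG v
  · exact_mod_cast (card_le_card hfiber).trans card_le_two

lemma sum_range_sum_range_natAbs_sub_le {G : ℕ → ℝ} (hG : ∀ v, 0 ≤ G v) (N : ℕ) :
    ∑ k ∈ range N, ∑ l ∈ range N, G ((k : ℤ) - l).natAbs ≤ 2 * N * ∑ v ∈ range N, G v := by
  calc _ ≤ ∑ _k ∈ range N, 2 * ∑ v ∈ range N, G v :=
        sum_le_sum fun k hk => sum_range_natAbs_sub_le hG (mem_range.1 hk)
    _ = _ := by rw [sum_const, card_range, nsmul_eq_mul]; ring

lemma abs_rhoFGN_pow_le {H s : ℝ} (p : ℕ) (h0 : 0 ≤ H) (h1 : H ≤ 1)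
    (hexp : p * (2 * H - 2) ≤ s - 1) (v : ℤ) :
    |rhoFGN H v ^ p| ≤ 18 ^ p * ((v.natAbs : ℝ) + 1) ^ (s - 1) := by
  have hbase : (1 : ℝ) ≤ v.natAbs + 1 := by linarith [(v.natAbs).cast_nonneg (α := ℝ)]
  calc |rhoFGN H v ^ p| = |rhoFGN H v| ^ p := abs_pow _ _
    _ ≤ (18 * ((v.natAbs : ℝ) + 1) ^ (2 * H - 2)) ^ p := by
      gcongr
      exact abs_rhoFGN_le h0 h1 v
    _ = 18 ^ p * ((v.natAbs : ℝ) + 1) ^ (p * (2 * H - 2)) := by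
      rw [mul_pow, ← Real.rpow_natCast (((v.natAbs : ℝ) + 1) ^ (2 * H - 2)),
        ← Real.rpow_mul (by linarith), mul_comm (2 * H - 2)]
    _ ≤ 18 ^ p * ((v.natAbs : ℝ) + 1) ^ (s - 1) := by gcongr

lemma abs_sum_sum_rhoFGN_pow_le {H s : ℝ} (p : ℕ) (h0 : 0 ≤ H) (h1 : H ≤ 1) (hs0 : 0 < s)
    (hs1 : s ≤ 1) (hexp : p * (2 * H - 2) ≤ s - 1) (N : ℕ) :
    |∑ k ∈ range N, ∑ l ∈ range N, rhoFGN H ((k : ℤ) - l) ^ p| ≤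
      2 * 18 ^ p / s * (N : ℝ) ^ (1 + s) := by
  let G : ℕ → ℝ := fun v => 18 ^ p * ((v : ℝ) + 1) ^ (s - 1)
  have hG : ∀ v, 0 ≤ G v := fun v => by positivity
  calc |∑ k ∈ range N, ∑ l ∈ range N, rhoFGN H ((k : ℤ) - l) ^ p|
      ≤ ∑ k ∈ range N, ∑ l ∈ range N, |rhoFGN H ((k : ℤ) - l) ^ p| :=
        (abs_sum_le_sum_abs _ _).trans (sum_le_sum fun _ _ => abs_sum_le_sum_abs _ _)
    _ ≤ ∑ k ∈ range N, ∑ l ∈ range N, G ((k : ℤ) - l).natAbs := by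
        gcongr with k _ l _
        exact abs_rhoFGN_pow_le p h0 h1 hexp _
    _ ≤ 2 * N * (18 ^ p * ∑ v ∈ range N, ((v : ℝ) + 1) ^ (s - 1)) := by
        rw [mul_sum]
        exact sum_range_sum_range_natAbs_sub_le hG N
    _ ≤ 2 * N * (18 ^ p * ((N : ℝ) ^ s / s)) := by
        gcongr
        exact sum_range_add_one_rpow_le hs0 hs1 N
    _ = 2 * 18 ^ p / s * (N : ℝ) ^ (1 + s) := by
        rw [Real.rpow_add' N.cast_nonneg (by linarith), Real.rpow_one]
        ring

lemma tendsto_rpow_mul_of_abs_le {f : ℕ → ℝ} {a b K : ℝ} (hab : a + b < 0)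
    (hf : ∀ N, |f N| ≤ K * (N : ℝ) ^ b) :
    Tendsto (fun N : ℕ => (N : ℝ) ^ a * f N) atTop (𝓝 0) := by
  have hdecay : Tendsto (fun N : ℕ => (N : ℝ) ^ (-(-(a + b)))) atTop (𝓝 0) :=
    (tendsto_rpow_neg_atTop (by linarith)).comp tendsto_natCast_atTop_atTop
  refine squeeze_zero_norm' ?_ (by simpa only [mul_zero] using hdecay.const_mul K)
  filter_upwards [eventually_gt_atTop 0] with N hN
  have hN : (0 : ℝ) < N := by exact_mod_cast hN
  rw [norm_mul, Real.norm_of_nonneg (Real.rpow_nonneg hN.le _), Real.norm_eq_abs, neg_neg,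
    Real.rpow_add hN, mul_left_comm]
  exact mul_le_mul_of_nonneg_left (hf N) (Real.rpow_nonneg hN.le _)

/-- For `p ≥ 1`, `H₀ ∈ (0, 1 − 1/(2p))`, `H₁ ∈ (1 − 1/(2p), 1)` and
`H̄ = (H₀ + H₁)/2`, one has `N^{p(1−H₁)−3/2} Σ_{k,l=0}^{N−1} ρ_{H̄}(k−l)^p → 0` as
`N → ∞`. -/
theorem stmt17 (p : ℕ) (hp : 1 ≤ p) (H₀ H₁ : ℝ)
    (hH₀ : H₀ ∈ Set.Ioo (0 : ℝ) (1 - 1 / (2 * (p : ℝ))))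
    (hH₁ : H₁ ∈ Set.Ioo (1 - 1 / (2 * (p : ℝ))) 1) :
    Tendsto
      (fun N : ℕ => (N : ℝ) ^ ((p : ℝ) * (1 - H₁) - 3 / 2) *
        ∑ k ∈ Finset.range N, ∑ l ∈ Finset.range N,
          rhoFGN ((H₀ + H₁) / 2) ((k : ℤ) - (l : ℤ)) ^ p)
      atTop (𝓝 0) := by
  obtain ⟨hH₀pos, hH₀lt⟩ := hH₀
  obtain ⟨hH₁gt, hH₁lt⟩ := hH₁
  have hp0 : (0 : ℝ) < p := by exact_mod_cast hp
  have hcrit : (p : ℝ) * (1 - 1 / (2 * p)) = p - 1 / 2 := by field_simp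
  have hlo : 1 / 2 < (p : ℝ) * (1 - H₀) := by
    have := mul_lt_mul_of_pos_left hH₀lt hp0; linarith
  have hhi : (p : ℝ) * (1 - H₁) < 1 / 2 := by
    have := mul_lt_mul_of_pos_left hH₁gt hp0; linarith
  obtain ⟨s, hs_lo, hs_hi⟩ : ∃ s, max 0 (1 + p * (2 * ((H₀ + H₁) / 2) - 2)) < s ∧
      s < min 1 (1 / 2 - p * (1 - H₁)) :=
    exists_between (max_lt (lt_min one_pos (by linarith))
      (lt_min (by nlinarith) (by linarith)))
  rw [max_lt_iff] at hs_lo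
  rw [lt_min_iff] at hs_hi
  have hbound := abs_sum_sum_rhoFGN_pow_le p (H := (H₀ + H₁) / 2) (by linarith) (by linarith)
    hs_lo.1 hs_hi.1.le (by linarith)
  exact tendsto_rpow_mul_of_abs_le (by linarith) hbound
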